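/- arXiv:2603.29556 — 4 statements merged into one kernel-verified Lean document; each statement's English description precedes it below -/
import Mathlib

section
/- Let φ : M_n(ℂ) → A be a linear map into a C*-algebra A. Then φ is completely positive if and only if its Choi matrix Choi(φ) := ∑_{i,j} e_{ij} ⊗ φ(e_{ij}) ∈ M_n(A) is positive. -/
open Matrix ComplexOrder
open scoped Matrix.Norms.L2Operator

variable {A : Type*} [NormedRing A] [StarRing A] [CStarRing A] [NormedAlgebra ℂ A]
  [StarModule ℂ A] [CompleteSpace A]

/-- Positivity of an element of `M_k(B)` for a complex star algebra `B`:
`M ≥ 0` iff `M = bᴴ * b` for some `b`. -/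
def PosIn {k : ℕ} {B : Type*} [Ring B] [StarRing B]
    (M : Matrix (Fin k) (Fin k) B) : Prop :=
  ∃ b : Matrix (Fin k) (Fin k) B, M = b.conjTranspose * b

/-!
The Choi matrix is the image under `Id ⊗ φ` of the block matrix `(e_ij)_ij`, which equals
`Rᴴ R` for the matrix `R` whose only nonzero row is `(e_1j)_j`; this gives one direction.
Conversely, if `Choi(φ) = bᴴ b` then `φ(Xᴴ Y) = ∑_{m,l} (V_ml X)* (V_ml Y)` with
`V_ml X = ∑_j X_mj b_lj` (a Kraus decomposition of `φ`), so `(Id ⊗ φ)(Nᴴ N) = Wᴴ W` for a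
rectangular matrix `W` over `A`. Splitting `Wᴴ W` row by row writes it as a sum of `Rᴴ R` with
`R` square, a positive element of the C⋆-algebra `M_k(A)`, hence of the form `dᴴ d`.
-/

section StarRing

variable {ι S B : Type*} [NonUnitalSemiring B] [StarRing B]

theorem Matrix.conjTranspose_updateRow_zero_mul_self [Fintype ι] [DecidableEq ι]
    (p : ι) (v : ι → B) :
    ((0 : Matrix ι ι B).updateRow p v)ᴴ * (0 : Matrix ι ι B).updateRow p v =
      vecMulVec (star v) v := by
  ext i j
  simp [Matrix.mul_apply, Matrix.updateRow_apply, vecMulVec_apply]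

theorem Matrix.conjTranspose_mul_eq_sum_vecMulVec {κ : Type*} [Fintype S]
    (W : Matrix S ι B) (V : Matrix S κ B) : Wᴴ * V = ∑ s, vecMulVec (star (W s)) (V s) := by
  ext i j
  simp [Matrix.mul_apply, Matrix.sum_apply, vecMulVec_apply]

end StarRing

theorem posIn_blockMatrixUnits {R : Type*} [Ring R] [StarRing R] (n : ℕ) :
    PosIn (fun i j => Matrix.single i j 1 : Matrix (Fin n) (Fin n) (Matrix (Fin n) (Fin n) R)) := by
  rcases isEmpty_or_nonempty (Fin n) with _ | ⟨⟨i₀⟩⟩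
  · exact ⟨0, Subsingleton.elim _ _⟩
  refine ⟨(0 : Matrix (Fin n) (Fin n) _).updateRow i₀ fun j => Matrix.single i₀ j 1, ?_⟩
  rw [Matrix.conjTranspose_updateRow_zero_mul_self]
  ext1 i j
  simp [vecMulVec_apply, Matrix.star_eq_conjTranspose, Matrix.conjTranspose_single]

section CStarAlgebra

variable {B : Type*} [CStarAlgebra B]

theorem CStarAlgebra.exists_sum_star_mul_self_eq_star_mul_self {S : Type*} [Fintype S]
    (x : S → B) : ∃ d, ∑ s, star (x s) * x s = star d * d := by
  let _ := CStarAlgebra.spectralOrder B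
  let _ := CStarAlgebra.spectralOrderedRing B
  exact CStarAlgebra.nonneg_iff_eq_star_mul_self.mp
    (Finset.sum_nonneg fun s _ => star_mul_self_nonneg (x s))

theorem Matrix.exists_sum_conjTranspose_mul_self_eq {ι S : Type*} [Fintype ι] [DecidableEq ι]
    [Fintype S] (R : S → Matrix ι ι B) : ∃ d : Matrix ι ι B, ∑ s, (R s)ᴴ * R s = dᴴ * d := by
  let _ := CStarAlgebra.spectralOrder B
  let _ := CStarAlgebra.spectralOrderedRing B
  obtain ⟨d, hd⟩ :=
    CStarAlgebra.exists_sum_star_mul_self_eq_star_mul_self fun s => CStarMatrix.ofMatrix (R s)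
  exact ⟨CStarMatrix.ofMatrix.symm d, hd⟩

theorem posIn_conjTranspose_mul_self {S : Type*} [Fintype S] {k : ℕ} (W : Matrix S (Fin k) B) :
    PosIn (Wᴴ * W) := by
  rcases isEmpty_or_nonempty (Fin k) with _ | ⟨⟨p⟩⟩
  · exact ⟨0, Subsingleton.elim _ _⟩
  rw [Matrix.conjTranspose_mul_eq_sum_vecMulVec]
  simp_rw [← Matrix.conjTranspose_updateRow_zero_mul_self p]
  exact Matrix.exists_sum_conjTranspose_mul_self_eq _

end CStarAlgebra

theorem LinearMap.apply_eq_sum_smul_single {R M : Type*} [CommSemiring R] [AddCommMonoid M]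
    [Module R M] {m n : Type*} [Fintype m] [Fintype n] [DecidableEq m] [DecidableEq n]
    (φ : Matrix m n R →ₗ[R] M) (x : Matrix m n R) :
    φ x = ∑ i, ∑ j, x i j • φ (Matrix.single i j 1) := by
  conv_lhs => rw [Matrix.matrix_eq_sum_single x]
  simp only [map_sum]
  refine Finset.sum_congr rfl fun i _ => Finset.sum_congr rfl fun j _ => ?_
  rw [← map_smul, Matrix.smul_single, smul_eq_mul, mul_one]

section Choi

variable {R B : Type*} [CommRing R] [StarRing R] [Ring B] [StarRing B] [Algebra R B]
  [StarModule R B] {n : ℕ} {φ : Matrix (Fin n) (Fin n) R →ₗ[R] B} {b : Matrix (Fin n) (Fin n) B}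

theorem LinearMap.apply_vecMulVec_star_of_choi_eq
    (hb : (fun i j => φ (Matrix.single i j 1)) = bᴴ * b) (x y : Fin n → R) :
    φ (vecMulVec (star x) y) = ∑ l, star (∑ i, x i • b l i) * ∑ j, y j • b l j := by
  have hchoi : ∀ i j, φ (Matrix.single i j 1) = ∑ l, star (b l i) * b l j := fun i j => by
    simpa [Matrix.mul_apply] using congrFun₂ hb i j
  rw [φ.apply_eq_sum_smul_single]
  simp only [hchoi, vecMulVec_apply, Pi.star_apply, star_sum,
    star_smul, Finset.sum_mul_sum, smul_mul_smul_comm, Finset.smul_sum]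
  conv_rhs => rw [Finset.sum_comm]
  exact Finset.sum_congr rfl fun i _ => Finset.sum_comm

theorem LinearMap.apply_conjTranspose_mul_of_choi_eq
    (hb : (fun i j => φ (Matrix.single i j 1)) = bᴴ * b) (X Y : Matrix (Fin n) (Fin n) R) :
    φ (Xᴴ * Y) = ∑ m, ∑ l, star (∑ i, X m i • b l i) * ∑ j, Y m j • b l j := by
  rw [Matrix.conjTranspose_mul_eq_sum_vecMulVec, map_sum]
  simp_rw [φ.apply_vecMulVec_star_of_choi_eq hb]

theorem Matrix.map_conjTranspose_mul_self_of_choi_eq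
    (hb : (fun i j => φ (Matrix.single i j 1)) = bᴴ * b) {k : ℕ}
    (N : Matrix (Fin k) (Fin k) (Matrix (Fin n) (Fin n) R)) :
    let W : Matrix (Fin k × Fin n × Fin n) (Fin k) B :=
      Matrix.of fun s p => ∑ j, N s.1 p s.2.1 j • b s.2.2 j
    (Nᴴ * N).map φ = Wᴴ * W := by
  ext p q
  rw [Matrix.map_apply, Matrix.mul_apply, map_sum, Matrix.mul_apply, Fintype.sum_prod_type]
  simp only [Matrix.conjTranspose_apply, Matrix.star_eq_conjTranspose,
    φ.apply_conjTranspose_mul_of_choi_eq hb, Fintype.sum_prod_type, Matrix.of_apply]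

end Choi

/-- `φ : Mₙ(ℂ) → A` is completely positive (all amplifications
`Id_{M_k} ⊗ φ : M_k(Mₙ(ℂ)) → M_k(A)` preserve positivity) iff its Choi matrix
`∑ᵢⱼ eᵢⱼ ⊗ φ(eᵢⱼ) ∈ Mₙ(A)` is positive. -/
theorem stmt1 (n : ℕ) (φ : Matrix (Fin n) (Fin n) ℂ →ₗ[ℂ] A) :
    (∀ (k : ℕ) (M : Matrix (Fin k) (Fin k) (Matrix (Fin n) (Fin n) ℂ)),
      PosIn M → PosIn (M.map φ)) ↔
    PosIn (fun i j => φ (Matrix.single i j 1) : Matrix (Fin n) (Fin n) A) := by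
  let _ : CStarAlgebra A := { ‹NormedRing A›, ‹StarRing A›, ‹CStarRing A›, ‹NormedAlgebra ℂ A›,
    ‹StarModule ℂ A›, ‹CompleteSpace A› with }
  constructor
  · intro hφ
    exact hφ n _ (posIn_blockMatrixUnits n)
  · rintro ⟨b, hb⟩ k M ⟨N, rfl⟩
    rw [Matrix.map_conjTranspose_mul_self_of_choi_eq hb]
    exact posIn_conjTranspose_mul_self _
end

section
/- Let φ : A → M_n(ℂ) be a linear map from a C*-algebra A. Then φ is completely positive if and only if the linear functional φ̂ on M_n(A) defined by φ̂([a_{ij}]) = ∑_{i,j} φ(a_{ij})_{ij} is positive. -/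
open Matrix ComplexOrder

variable {A : Type*} [NormedRing A] [StarRing A] [CStarRing A] [NormedAlgebra ℂ A]
  [StarModule ℂ A] [CompleteSpace A]

/-!
Identify `Mₖ(Mₙ(ℂ))` with `M_{k×n}(ℂ)`, where positivity becomes positive semidefiniteness.
If `φ` is completely positive, then `φ̂(M)` is the value of the quadratic form of the positive
matrix `φₙ(M)` at the vectorised identity. Conversely, for `P = cᴴc` in `Mₖ(A)` and
`x ∈ ℂ^{k×n}`, the quadratic form of `φₖ(P)` at `x` equals `∑ₜ φ̂(uₜᴴuₜ)` with
`uₜ = (∑ₛ x(s,j) cₜₛ)ⱼ ∈ Aⁿ`, and each rank-one matrix `uₜᴴuₜ` is `vᴴv` for the matrix `v`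
whose only nonzero row is `uₜ`.
-/

namespace Matrix

theorem comp_conjTranspose {I J K R : Type*} [Star R] (M : Matrix I J (Matrix K K R)) :
    comp J I K K R Mᴴ = (comp I J K K R M)ᴴ := by
  ext ⟨i, k⟩ ⟨j, l⟩
  simp [conjTranspose_apply]

theorem conjTranspose_mul_self_eq_sum_vecMulVec {m n R : Type*} [Fintype m]
    [NonUnitalSemiring R] [StarRing R] (c : Matrix m n R) :
    cᴴ * c = ∑ t, vecMulVec (star (c t)) (c t) := by
  ext i j
  simp [mul_apply, vecMulVec_apply, sum_apply, conjTranspose_apply]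

theorem star_vec_one_dotProduct_compRingEquiv_mulVec {ι R : Type*} [Fintype ι] [DecidableEq ι]
    [CommSemiring R] [StarRing R] (N : Matrix ι ι (Matrix ι ι R)) :
    star (vec (1 : Matrix ι ι R)) ⬝ᵥ (compRingEquiv ι ι R N *ᵥ vec 1) = ∑ i, ∑ j, N i j i j := by
  simp [vec, dotProduct, mulVec, Fintype.sum_prod_type, one_apply, apply_ite star]

theorem posSemidef_iff_exists_eq_conjTranspose_mul_self {𝕜 m : Type*} [RCLike 𝕜] [Fintype m]
    [DecidableEq m] {M : Matrix m m 𝕜} : M.PosSemidef ↔ ∃ B : Matrix m m 𝕜, M = Bᴴ * B := by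
  open scoped MatrixOrder in
  exact ⟨fun hM => CStarAlgebra.nonneg_iff_eq_star_mul_self.mp hM.nonneg,
    fun ⟨B, hB⟩ => hB ▸ posSemidef_conjTranspose_mul_self B⟩

/-- In `ComplexOrder`, `0 ≤ z` forces `z` to be real, and a complex matrix whose quadratic form is
real-valued is Hermitian. -/
theorem posSemidef_of_dotProduct_mulVec_nonneg {m : Type*} [Fintype m] {M : Matrix m m ℂ}
    (hM : ∀ x, 0 ≤ star x ⬝ᵥ (M *ᵥ x)) : M.PosSemidef := by
  classical
  rw [← isPositive_toEuclideanLin_iff, LinearMap.isPositive_iff_complex]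
  intro x
  obtain ⟨hre, him⟩ := Complex.nonneg_iff.mp (hM x.ofLp)
  have hinner : inner ℂ (toEuclideanLin M x) x = star (star x.ofLp ⬝ᵥ (M *ᵥ x.ofLp)) := by
    rw [EuclideanSpace.inner_eq_star_dotProduct, ofLp_toLpLin, toLin'_apply, dotProduct_star,
      dotProduct_comm]
  simp [hinner, Complex.ext_iff, ← him, hre]

end Matrix

theorem posIn_vecMulVec_star_self {n : ℕ} {R : Type*} [Ring R] [StarRing R] (w : Fin n → R) :
    PosIn (vecMulVec (star w) w) := by
  cases n with
  | zero => exact ⟨0, Subsingleton.elim _ _⟩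
  | succ n =>
    refine ⟨of (Pi.single 0 w), ?_⟩
    ext i j
    simp [mul_apply, vecMulVec_apply, conjTranspose_apply, Pi.single_apply, ite_apply]

theorem posIn_iff_posSemidef_compRingEquiv {𝕜 : Type*} [RCLike 𝕜] {k n : ℕ}
    (M : Matrix (Fin k) (Fin k) (Matrix (Fin n) (Fin n) 𝕜)) :
    PosIn M ↔ (compRingEquiv (Fin k) (Fin n) 𝕜 M).PosSemidef := by
  rw [posSemidef_iff_exists_eq_conjTranspose_mul_self]
  refine (compRingEquiv (Fin k) (Fin n) 𝕜).toEquiv.exists_congr fun b => ?_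
  rw [← (compRingEquiv (Fin k) (Fin n) 𝕜).injective.eq_iff, map_mul]
  simp [comp_conjTranspose]

section HatFunctional

variable {B ι κ : Type*} [Semiring B] [StarRing B] [Algebra ℂ B] [StarModule ℂ B]
  [Fintype ι] [Fintype κ]

def LinearMap.hatFunctional (φ : B →ₗ[ℂ] Matrix ι ι ℂ) (M : Matrix ι ι B) : ℂ :=
  ∑ i, ∑ j, φ (M i j) i j

theorem star_dotProduct_comp_map_vecMulVec_mulVec (φ : B →ₗ[ℂ] Matrix ι ι ℂ) (a : κ → B)
    (x : κ × ι → ℂ) :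
    star x ⬝ᵥ (compRingEquiv κ ι ℂ ((vecMulVec (star a) a).map φ) *ᵥ x) =
      φ.hatFunctional
        (vecMulVec (star fun j => ∑ s, x (s, j) • a s) fun j => ∑ s, x (s, j) • a s) := by
  simp only [dotProduct, Pi.star_apply, RCLike.star_def, mulVec, compRingEquiv_apply, comp_apply,
    map_apply, vecMulVec_apply, Fintype.sum_prod_type, Finset.mul_sum, LinearMap.hatFunctional,
    star_sum, star_smul, Algebra.mul_smul_comm, Finset.sum_mul, Algebra.smul_mul_assoc, map_sum,
    map_smul, Matrix.sum_apply, Matrix.smul_apply, smul_eq_mul]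
  rw [Finset.sum_comm]
  refine Finset.sum_congr rfl fun i _ => ?_
  rw [Finset.sum_comm]
  conv_rhs => rw [Finset.sum_comm]
  refine Finset.sum_congr rfl fun s _ => ?_
  rw [Finset.sum_comm]
  exact Finset.sum_congr rfl fun j _ => Finset.sum_congr rfl fun r _ => by ring

theorem star_dotProduct_comp_map_conjTranspose_mul_self_mulVec {τ : Type*} [Fintype τ]
    (φ : B →ₗ[ℂ] Matrix ι ι ℂ) (c : Matrix τ κ B) (x : κ × ι → ℂ) :
    star x ⬝ᵥ (compRingEquiv κ ι ℂ ((cᴴ * c).map φ) *ᵥ x) =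
      ∑ t, φ.hatFunctional
        (vecMulVec (star fun j => ∑ s, x (s, j) • c t s) fun j => ∑ s, x (s, j) • c t s) := by
  have hmap : (∑ t, vecMulVec (star (c t)) (c t)).map φ =
      ∑ t, (vecMulVec (star (c t)) (c t)).map φ :=
    map_sum (φ : B →+ Matrix ι ι ℂ).mapMatrix _ _
  simp only [conjTranspose_mul_self_eq_sum_vecMulVec, hmap, map_sum, sum_mulVec, dotProduct_sum,
    star_dotProduct_comp_map_vecMulVec_mulVec]

end HatFunctional

/-- a linear map `φ : A → Mₙ(ℂ)` is completely positive iff the functional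
`φ̂ : Mₙ(A) → ℂ`, `φ̂([aᵢⱼ]) = ∑ᵢⱼ φ(aᵢⱼ)ᵢⱼ`, is positive (nonnegative on positive elements,
where `0 ≤ z` refers to the complex order). -/
theorem stmt2 (n : ℕ) (φ : A →ₗ[ℂ] Matrix (Fin n) (Fin n) ℂ) :
    (∀ (k : ℕ) (M : Matrix (Fin k) (Fin k) A), PosIn M → PosIn (M.map φ)) ↔
    (∀ M : Matrix (Fin n) (Fin n) A, PosIn M →
      0 ≤ ∑ i : Fin n, ∑ j : Fin n, φ (M i j) i j) := by
  constructor
  · intro hcp M hM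
    have hpsd := (posIn_iff_posSemidef_compRingEquiv _).mp (hcp n M hM)
    simpa only [star_vec_one_dotProduct_compRingEquiv_mulVec, map_apply] using
      hpsd.dotProduct_mulVec_nonneg (vec 1)
  · rintro hφ k _ ⟨c, rfl⟩
    rw [posIn_iff_posSemidef_compRingEquiv]
    refine posSemidef_of_dotProduct_mulVec_nonneg fun x => ?_
    rw [star_dotProduct_comp_map_conjTranspose_mul_self_mulVec]
    exact Finset.sum_nonneg fun t _ => hφ _ (posIn_vecMulVec_star_self _)
end

section
/- For any bounded linear map φ : A → M_m(ℂ) from a C*-algebra A, ‖φ‖_cb ≤ m · ‖φ‖. -/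
/-!
Pair the amplification with vectors `ξ, η ∈ ℂ^k ⊗ ℂ^m` and cut them into their `m` slices
`ξ_s, η_t ∈ ℂ^k`: then `⟪ξ, (id ⊗ φ)(M) η⟫ = ∑_{s,t} φ(ξ_s^* M η_t)_{st}`. Feeding the scalar
columns `ξ_s • 1` into the supremum defining `‖M‖` gives `‖ξ_s^* M η_t‖ ≤ ‖M‖ ‖ξ_s‖ ‖η_t‖`, and an
entry of `φ(a)` is at most `‖φ‖ ‖a‖`. Finally Cauchy–Schwarz gives `∑_s ‖ξ_s‖ ≤ √m ‖ξ‖`, so the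
double sum costs the factor `√m · √m = m`.
-/

open Matrix
open scoped Matrix.Norms.L2Operator

variable {A : Type*} [NormedRing A] [StarRing A] [CStarRing A] [NormedAlgebra ℂ A]
  [StarModule ℂ A] [CompleteSpace A] [PartialOrder A] [StarOrderedRing A]

/-- The canonical C*-norm of a matrix over a C*-algebra `A` (the norm of the corresponding
operator on the Hilbert `A`-module `A^k`). -/
noncomputable def matNorm {k : ℕ} (M : Matrix (Fin k) (Fin k) A) : ℝ :=
  sSup {c | ∃ x y : Fin k → A,
    (∑ i, star (x i) * x i) ≤ 1 ∧ (∑ j, star (y j) * y j) ≤ 1 ∧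
    c = ‖∑ i, ∑ j, star (x i) * M i j * y j‖}

/-- The `k`-th amplification `Id_{M_k} ⊗ φ : M_k(A) → M_k(M_m(ℂ))` of `φ : A → M_m(ℂ)`. -/
noncomputable def amp {m : ℕ} (φ : A →ₗ[ℂ] Matrix (Fin m) (Fin m) ℂ) (k : ℕ)
    (M : Matrix (Fin k) (Fin k) A) : Matrix (Fin k × Fin m) (Fin k × Fin m) ℂ :=
  fun p q => φ (M p.1 q.1) p.2 q.2

lemma Matrix.norm_apply_le_l2_opNorm {𝕜 m n : Type*} [RCLike 𝕜] [Fintype m] [Fintype n]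
    [DecidableEq n] (B : Matrix m n 𝕜) (i : m) (j : n) : ‖B i j‖ ≤ ‖B‖ := by
  have h := B.l2_opNorm_mulVec (EuclideanSpace.single j 1)
  rw [PiLp.norm_single, norm_one, mul_one] at h
  refine le_trans ?_ h
  simpa using
    PiLp.norm_apply_le ((EuclideanSpace.equiv m 𝕜).symm (B *ᵥ EuclideanSpace.single j 1)) i

section slice

variable {𝕜 ι κ : Type*} [RCLike 𝕜] [Fintype ι] [Fintype κ]

noncomputable def slice (ξ : EuclideanSpace 𝕜 (ι × κ)) (s : κ) : EuclideanSpace 𝕜 ι :=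
  WithLp.toLp 2 fun i => ξ (i, s)

lemma sum_norm_slice_sq (ξ : EuclideanSpace 𝕜 (ι × κ)) : ∑ s, ‖slice ξ s‖ ^ 2 = ‖ξ‖ ^ 2 := by
  simp only [EuclideanSpace.norm_sq_eq, slice, Fintype.sum_prod_type]
  exact Finset.sum_comm

lemma sum_norm_slice_le (ξ : EuclideanSpace 𝕜 (ι × κ)) :
    ∑ s, ‖slice ξ s‖ ≤ √(Fintype.card κ) * ‖ξ‖ := by
  have h := Real.sum_mul_le_sqrt_mul_sqrt Finset.univ (fun s => ‖slice ξ s‖) (fun _ => 1)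
  simp only [mul_one, one_pow, Finset.sum_const, Finset.card_univ, nsmul_eq_mul, sum_norm_slice_sq,
    Real.sqrt_sq (norm_nonneg _)] at h
  linarith

end slice

section compress

variable {E ι : Type*} [AddCommGroup E] [Module ℂ E] [Fintype ι]

noncomputable def compress (M : Matrix ι ι E) (ξ η : EuclideanSpace ℂ ι) : E :=
  ∑ i, ∑ j, (star (ξ i) * η j) • M i j

lemma compress_smul_smul (M : Matrix ι ι E) (a b : ℂ) (ξ η : EuclideanSpace ℂ ι) :
    compress M (a • ξ) (b • η) = (star a * b) • compress M ξ η := by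
  simp only [compress, Finset.smul_sum, smul_smul, PiLp.smul_apply, smul_eq_mul, star_mul']
  congr! 3
  ring

end compress

lemma sum_star_mul_self_smul_one {B ι : Type*} [Ring B] [StarRing B] [Algebra ℂ B]
    [StarModule ℂ B] [Fintype ι] (ξ : EuclideanSpace ℂ ι) :
    ∑ i, star (ξ i • (1 : B)) * (ξ i • 1) = ((‖ξ‖ ^ 2 : ℝ) : ℂ) • 1 := by
  simp only [star_smul, star_one, smul_mul_smul_comm, one_mul, RCLike.star_def, RCLike.conj_mul,
    EuclideanSpace.norm_sq_eq, ← Finset.sum_smul]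
  push_cast
  rfl

lemma norm_le_one_of_sum_star_mul_self_le_one {ι : Type*} {s : Finset ι} {x : ι → A}
    (hx : ∑ i ∈ s, star (x i) * x i ≤ 1) {i : ι} (hi : i ∈ s) : ‖x i‖ ≤ 1 := by
  let _ : CStarAlgebra A := { }
  nontriviality A
  have hle : star (x i) * x i ≤ 1 :=
    (Finset.single_le_sum (fun j _ => star_mul_self_nonneg (x j)) hi).trans hx
  have h := CStarAlgebra.norm_le_norm_of_nonneg_of_le (star_mul_self_nonneg (x i)) hle
  rw [CStarRing.norm_one, CStarRing.norm_star_mul_self, ← sq] at h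
  exact pow_le_one_iff_of_nonneg (norm_nonneg _) two_ne_zero |>.mp h

variable {k m : ℕ}

lemma matNorm_bddAbove (M : Matrix (Fin k) (Fin k) A) :
    BddAbove {c | ∃ x y : Fin k → A,
      (∑ i, star (x i) * x i) ≤ 1 ∧ (∑ j, star (y j) * y j) ≤ 1 ∧
      c = ‖∑ i, ∑ j, star (x i) * M i j * y j‖} := by
  refine ⟨∑ i, ∑ j, ‖M i j‖, ?_⟩
  rintro c ⟨x, y, hx, hy, rfl⟩
  refine (norm_sum_le _ _).trans (Finset.sum_le_sum fun i _ => ?_)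
  refine (norm_sum_le _ _).trans (Finset.sum_le_sum fun j _ => ?_)
  calc ‖star (x i) * M i j * y j‖ ≤ ‖star (x i)‖ * ‖M i j‖ * ‖y j‖ := norm_mul₃_le
    _ ≤ 1 * ‖M i j‖ * 1 := by
        gcongr
        · exact (norm_star _).trans_le
            (norm_le_one_of_sum_star_mul_self_le_one hx (Finset.mem_univ i))
        · exact norm_le_one_of_sum_star_mul_self_le_one hy (Finset.mem_univ j)
    _ = ‖M i j‖ := by ring

lemma norm_le_matNorm (M : Matrix (Fin k) (Fin k) A) {x y : Fin k → A}
    (hx : ∑ i, star (x i) * x i ≤ 1) (hy : ∑ j, star (y j) * y j ≤ 1) :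
    ‖∑ i, ∑ j, star (x i) * M i j * y j‖ ≤ matNorm M :=
  le_csSup (matNorm_bddAbove M) ⟨x, y, hx, hy, rfl⟩

lemma matNorm_nonneg (M : Matrix (Fin k) (Fin k) A) : 0 ≤ matNorm M :=
  (norm_nonneg _).trans (norm_le_matNorm M (x := 0) (y := 0) (by simp) (by simp))

lemma norm_compress_le_of_norm_eq_one (M : Matrix (Fin k) (Fin k) A)
    {ξ η : EuclideanSpace ℂ (Fin k)} (hξ : ‖ξ‖ = 1) (hη : ‖η‖ = 1) :
    ‖compress M ξ η‖ ≤ matNorm M := by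
  have hx : ∑ i, star (ξ i • (1 : A)) * (ξ i • 1) ≤ 1 := by
    rw [sum_star_mul_self_smul_one, hξ]; simp
  have hy : ∑ j, star (η j • (1 : A)) * (η j • 1) ≤ 1 := by
    rw [sum_star_mul_self_smul_one, hη]; simp
  convert norm_le_matNorm M hx hy using 2
  simp [compress, smul_smul, mul_comm]

lemma norm_compress_le (M : Matrix (Fin k) (Fin k) A) (ξ η : EuclideanSpace ℂ (Fin k)) :
    ‖compress M ξ η‖ ≤ matNorm M * ‖ξ‖ * ‖η‖ := by
  rcases eq_or_ne ξ 0 with rfl | hξ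
  · simp [compress]
  rcases eq_or_ne η 0 with rfl | hη
  · simp [compress]
  have hξ' : (‖ξ‖ : ℂ) ≠ 0 := by simpa using hξ
  have hη' : (‖η‖ : ℂ) ≠ 0 := by simpa using hη
  have hunit := norm_compress_le_of_norm_eq_one M (ξ := (‖ξ‖⁻¹ : ℂ) • ξ) (η := (‖η‖⁻¹ : ℂ) • η)
    (by simp [norm_smul, hξ]) (by simp [norm_smul, hη])
  have hscale : compress M ξ η = ((‖ξ‖ * ‖η‖ : ℝ) : ℂ) •
      compress M ((‖ξ‖⁻¹ : ℂ) • ξ) ((‖η‖⁻¹ : ℂ) • η) := by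
    rw [compress_smul_smul, smul_smul]
    simp only [Complex.ofReal_mul, RCLike.star_def, map_inv₀, Complex.conj_ofReal]
    rw [mul_mul_mul_comm, mul_inv_cancel₀ hξ', mul_inv_cancel₀ hη', mul_one, one_smul]
  rw [hscale, norm_smul, Complex.norm_real, Real.norm_of_nonneg (by positivity)]
  nlinarith [mul_nonneg (norm_nonneg ξ) (norm_nonneg η)]

lemma inner_amp_mulVec {B : Type*} [NormedRing B] [NormedAlgebra ℂ B]
    (φ : B →ₗ[ℂ] Matrix (Fin m) (Fin m) ℂ) (M : Matrix (Fin k) (Fin k) B)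
    (ξ η : EuclideanSpace ℂ (Fin k × Fin m)) :
    inner ℂ ξ (WithLp.toLp 2 (amp φ k M *ᵥ η)) =
      ∑ s, ∑ t, φ (compress M (slice ξ s) (slice η t)) s t := by
  simp only [EuclideanSpace.inner_eq_star_dotProduct, dotProduct, mulVec, amp, compress, slice,
    map_sum, map_smul, Matrix.sum_apply, Matrix.smul_apply, Fintype.sum_prod_type, Finset.sum_mul,
    smul_eq_mul, Pi.star_apply]
  rw [Finset.sum_comm]
  refine Finset.sum_congr rfl fun s _ => ?_
  conv_rhs => rw [Finset.sum_comm]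
  refine Finset.sum_congr rfl fun i _ => ?_
  conv_rhs => rw [Finset.sum_comm]
  refine Finset.sum_congr rfl fun j _ => Finset.sum_congr rfl fun t _ => ?_
  ring

lemma norm_inner_amp_mulVec_le {φ : A →ₗ[ℂ] Matrix (Fin m) (Fin m) ℂ} {C : ℝ} (hC : 0 ≤ C)
    (hφ : ∀ a : A, ‖φ a‖ ≤ C * ‖a‖) (M : Matrix (Fin k) (Fin k) A)
    (ξ η : EuclideanSpace ℂ (Fin k × Fin m)) :
    ‖inner ℂ ξ (WithLp.toLp 2 (amp φ k M *ᵥ η))‖ ≤ m * C * matNorm M * ‖ξ‖ * ‖η‖ := by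
  have hCM : 0 ≤ C * matNorm M := mul_nonneg hC (matNorm_nonneg M)
  have hξ := sum_norm_slice_le ξ
  have hη := sum_norm_slice_le η
  rw [Fintype.card_fin] at hξ hη
  rw [inner_amp_mulVec]
  calc _ ≤ ∑ s, ∑ t, ‖φ (compress M (slice ξ s) (slice η t)) s t‖ :=
        (norm_sum_le _ _).trans (Finset.sum_le_sum fun s _ => norm_sum_le _ _)
    _ ≤ ∑ s, ∑ t, C * (matNorm M * ‖slice ξ s‖ * ‖slice η t‖) := by
        gcongr with s _ t _
        exact (norm_apply_le_l2_opNorm _ s t).trans ((hφ _).trans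
          (mul_le_mul_of_nonneg_left (norm_compress_le M _ _) hC))
    _ = C * matNorm M * (∑ s, ‖slice ξ s‖) * (∑ t, ‖slice η t‖) := by
        rw [mul_assoc (C * matNorm M), Finset.sum_mul_sum, Finset.mul_sum]
        refine Finset.sum_congr rfl fun s _ => ?_
        rw [Finset.mul_sum]
        exact Finset.sum_congr rfl fun t _ => by ring
    _ ≤ C * matNorm M * (√m * ‖ξ‖) * (√m * ‖η‖) := by gcongr
    _ = m * C * matNorm M * ‖ξ‖ * ‖η‖ := by
        linear_combination
          C * matNorm M * ‖ξ‖ * ‖η‖ * Real.mul_self_sqrt (Nat.cast_nonneg (α := ℝ) m)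

/-- for a bounded linear map `φ : A → M_m(ℂ)` from a C*-algebra,
`‖φ‖_cb ≤ m ⬝ ‖φ‖`: if `‖φ‖ ≤ C` then every amplification has norm at most `m ⬝ C`. -/
theorem stmt5 (m : ℕ) (φ : A →ₗ[ℂ] Matrix (Fin m) (Fin m) ℂ)
    (C : ℝ) (hC : 0 ≤ C) (hφ : ∀ a : A, ‖φ a‖ ≤ C * ‖a‖) :
    ∀ (k : ℕ) (M : Matrix (Fin k) (Fin k) A),
      ‖amp φ k M‖ ≤ (m : ℝ) * C * matNorm M := by
  intro k M
  have hK : 0 ≤ (m : ℝ) * C * matNorm M :=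
    mul_nonneg (mul_nonneg m.cast_nonneg hC) (matNorm_nonneg M)
  rw [l2_opNorm_def]
  refine ContinuousLinearMap.opNorm_le_of_re_inner_le hK fun η ξ hη hξ => ?_
  calc RCLike.re (inner ℂ _ ξ) ≤ ‖inner ℂ ξ (WithLp.toLp 2 (amp φ k M *ᵥ η))‖ := by
        rw [← inner_conj_symm]
        exact (RCLike.re_le_norm _).trans_eq (RCLike.norm_conj _)
    _ ≤ m * C * matNorm M * ‖ξ‖ * ‖η‖ := norm_inner_amp_mulVec_le hC hφ M ξ η
    _ = m * C * matNorm M := by rw [hξ, hη, mul_one, mul_one]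
end

section
/- Horodecki criterion: an element x ∈ (M_n(ℂ) ⊗ M_m(ℂ))_+ is separable if and only if (Id ⊗ φ)(x) ≥ 0 for every positive linear map φ : M_n(ℂ) → M_m(ℂ). -/
open Matrix ComplexOrder Kronecker
open scoped Matrix.Norms.L2Operator

/-- The separable elements of `Mₙ(ℂ) ⊗ M_m(ℂ)`: the closed cone generated by `P ⊗ Q`
with `P, Q` positive semidefinite. -/
def Separable (n m : ℕ) : Set (Matrix (Fin n × Fin m) (Fin n × Fin m) ℂ) :=
  closure {X | ∃ (N : ℕ) (P : Fin N → Matrix (Fin n) (Fin n) ℂ)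
    (Q : Fin N → Matrix (Fin m) (Fin m) ℂ),
    (∀ t, (P t).PosSemidef) ∧ (∀ t, (Q t).PosSemidef) ∧ X = ∑ t, P t ⊗ₖ Q t}

/-- Application of `φ : Mₙ(ℂ) → M_m(ℂ)` to the first tensor leg of `x ∈ Mₙ ⊗ M_m`,
giving `(φ ⊗ Id)(x) ∈ M_m ⊗ M_m`; on elementary tensors `A ⊗ B ↦ φ(A) ⊗ B`. -/
noncomputable def applyFst {n m : ℕ} (φ : Matrix (Fin n) (Fin n) ℂ →ₗ[ℂ] Matrix (Fin m) (Fin m) ℂ)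
    (x : Matrix (Fin n × Fin m) (Fin n × Fin m) ℂ) :
    Matrix (Fin m × Fin m) (Fin m × Fin m) ℂ :=
  fun p q => ∑ i : Fin n, ∑ j : Fin n,
    x (i, p.2) (j, q.2) * φ (Matrix.single i j 1) p.1 q.1

/-!
Forward direction: `φ ⊗ Id` is continuous and linear and maps `P ⊗ Q` to `φ(P) ⊗ Q ≥ 0`, so it
maps the closed cone of separable elements into the closed cone of positive matrices.

Backward direction: if `x` is not separable, Farkas' lemma gives a real functional `f` that is
nonnegative on separable elements and negative at `x`. On Hermitian matrices `f = tr(· C)` for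
a Hermitian `C`. The map `φ` with Choi matrix `Cᵀ` is positive, since
`⟨v, φ(P) v⟩ = f(P ⊗ v̄ vᵀ) ≥ 0`, while pairing `(φ ⊗ Id)(x)` with the maximally entangled vector
gives `f(x) < 0`.
-/

noncomputable def productCone (ι κ : Type*) :
    PointedCone ℝ (Matrix (ι × κ) (ι × κ) ℂ) :=
  PointedCone.hull ℝ
    {X | ∃ (P : Matrix ι ι ℂ) (Q : Matrix κ κ ℂ), P.PosSemidef ∧ Q.PosSemidef ∧ X = P ⊗ₖ Q}

theorem separable_eq_closure_productCone (n m : ℕ) :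
    Separable n m = closure (productCone (Fin n) (Fin m)) := by
  unfold Separable productCone
  congr 1
  ext X
  rw [SetLike.mem_coe, Submodule.mem_span_set']
  constructor
  · rintro ⟨N, P, Q, hP, hQ, rfl⟩
    exact ⟨N, 1, fun t => ⟨P t ⊗ₖ Q t, P t, Q t, hP t, hQ t, rfl⟩, by simp⟩
  · rintro ⟨N, c, g, rfl⟩
    choose P Q hP hQ hPQ using fun t => (g t).2
    refine ⟨N, fun t => (c t : ℝ) • P t, Q, fun t => (hP t).smul (c t).2, hQ, ?_⟩
    refine Finset.sum_congr rfl fun t _ => ?_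
    rw [hPQ t, smul_kronecker]
    rfl

namespace Matrix

theorem isClosed_setOf_posSemidef {ι : Type*} [Fintype ι] :
    IsClosed {M : Matrix ι ι ℂ | M.PosSemidef} := by
  classical
  have hquad (v : ι → ℂ) : Continuous fun M : Matrix ι ι ℂ => star v ⬝ᵥ M *ᵥ v := by
    convert LinearMap.continuous_of_finiteDimensional (LinearMap.applyₗ v ∘ₗ
      LinearMap.applyₗ (star v) ∘ₗ
      (toLinearMap₂' ℂ : Matrix ι ι ℂ ≃ₗ[ℂ] (ι → ℂ) →ₗ[ℂ] (ι → ℂ) →ₗ[ℂ] ℂ).toLinearMap) using 1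
    ext M
    simp [toLinearMap₂'_apply']
  have hconj : Continuous fun M : Matrix ι ι ℂ => Mᴴ :=
    LinearMap.continuous_of_finiteDimensional (𝕜 := ℝ)
      { toFun := conjTranspose, map_add' := conjTranspose_add,
        map_smul' := fun c M => by simp [conjTranspose_smul] }
  have : {M : Matrix ι ι ℂ | M.PosSemidef} =
      {M | Mᴴ = M} ∩ ⋂ v : ι → ℂ, {M | 0 ≤ star v ⬝ᵥ M *ᵥ v} := by
    ext M
    simp only [Set.mem_inter_iff, Set.mem_iInter, Set.mem_ofPred_eq,
      posSemidef_iff_dotProduct_mulVec]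
    rfl
  rw [this]
  exact (isClosed_eq hconj continuous_id).inter
    (isClosed_iInter fun v => isClosed_Ici.preimage (hquad v))

theorem single_eq_re_smul_add_im_smul {ι : Type*} [DecidableEq ι] (p q : ι) (z : ℂ) :
    single p q z = z.re • single p q (1 : ℂ) + z.im • single p q Complex.I := by
  rw [smul_single, smul_single, ← single_add]
  simp

theorem exists_isHermitian_trace_mul_eq {ι : Type*} [Fintype ι] [DecidableEq ι]
    (f : Matrix ι ι ℂ →ₗ[ℝ] ℝ) :
    ∃ C : Matrix ι ι ℂ, C.IsHermitian ∧
      ∀ X : Matrix ι ι ℂ, X.IsHermitian → trace (X * C) = f X := by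
  -- `f = Re tr(· D)` since `Re (z * D q p) = z.re * f (single p q 1) + z.im * f (single p q I)`;
  -- on Hermitian `X` the trace against the Hermitian part of `D` is already real.
  set D : Matrix ι ι ℂ := of fun q p => f (single p q 1) - Complex.I * f (single p q Complex.I)
  have hD (X : Matrix ι ι ℂ) : (trace (X * D)).re = f X := by
    conv_rhs => rw [matrix_eq_sum_single X]
    simp only [trace, diag, mul_apply, map_sum, Complex.re_sum]
    refine Finset.sum_congr rfl fun p _ => Finset.sum_congr rfl fun q _ => ?_
    rw [single_eq_re_smul_add_im_smul, map_add, map_smul, map_smul]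
    simp [D, Complex.mul_re]
  refine ⟨(2 : ℂ)⁻¹ • (D + Dᴴ), ?_, fun X hX => ?_⟩
  · simp [IsHermitian, conjTranspose_smul, add_comm]
  · have hstar : trace (X * Dᴴ) = star (trace (X * D)) := by
      rw [← trace_conjTranspose, conjTranspose_mul, hX.eq, trace_mul_comm]
    rw [mul_smul_comm, mul_add, trace_smul, trace_add, hstar, Complex.star_def, Complex.add_conj,
      hD]
    simp

section ChoiMatrix
variable {ι κ : Type*} [Fintype ι]

noncomputable def ofChoiMatrix (J : Matrix (ι × κ) (ι × κ) ℂ) :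
    Matrix ι ι ℂ →ₗ[ℂ] Matrix κ κ ℂ where
  toFun A := of fun k l => ∑ i, ∑ j, A i j * J (i, k) (j, l)
  map_add' A B := by ext; simp [add_mul, Finset.sum_add_distrib]
  map_smul' c A := by ext; simp [Finset.mul_sum, mul_assoc]

theorem ofChoiMatrix_apply (J : Matrix (ι × κ) (ι × κ) ℂ) (A : Matrix ι ι ℂ) (k l : κ) :
    ofChoiMatrix J A k l = ∑ i, ∑ j, A i j * J (i, k) (j, l) := rfl

theorem ofChoiMatrix_single [DecidableEq ι] (J : Matrix (ι × κ) (ι × κ) ℂ) (i j : ι) :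
    ofChoiMatrix J (single i j 1) = of fun k l => J (i, k) (j, l) := by
  ext k l
  simp [ofChoiMatrix_apply, single_apply, ite_and]

theorem IsHermitian.ofChoiMatrix {J : Matrix (ι × κ) (ι × κ) ℂ} (hJ : J.IsHermitian)
    {A : Matrix ι ι ℂ} (hA : A.IsHermitian) : (ofChoiMatrix J A).IsHermitian := by
  ext k l
  simp only [conjTranspose_apply, ofChoiMatrix_apply, star_sum, star_mul']
  rw [Finset.sum_comm]
  simp_rw [hA.apply, hJ.apply]

theorem dotProduct_ofChoiMatrix_mulVec [Fintype κ] (J : Matrix (ι × κ) (ι × κ) ℂ)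
    (A : Matrix ι ι ℂ) (v : κ → ℂ) :
    star v ⬝ᵥ ofChoiMatrix J A *ᵥ v = trace ((A ⊗ₖ vecMulVec (star v) v) * Jᵀ) := by
  simp only [dotProduct, mulVec, trace, diag, mul_apply, ofChoiMatrix_apply, Fintype.sum_prod_type,
    transpose_apply, kroneckerMap_apply, vecMulVec_apply, Pi.star_apply, Finset.mul_sum,
    Finset.sum_mul, Finset.sum_comm (s := (Finset.univ : Finset κ)) (t := (Finset.univ : Finset ι))]
  simp only [mul_comm, mul_left_comm, mul_assoc]

end ChoiMatrix

end Matrix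

def maxEntangled (κ : Type*) [DecidableEq κ] : κ × κ → ℂ := fun p => if p.1 = p.2 then 1 else 0

section ApplyFst
variable {n m : ℕ}

noncomputable def applyFstₗ (φ : Matrix (Fin n) (Fin n) ℂ →ₗ[ℂ] Matrix (Fin m) (Fin m) ℂ) :
    Matrix (Fin n × Fin m) (Fin n × Fin m) ℂ →ₗ[ℂ] Matrix (Fin m × Fin m) (Fin m × Fin m) ℂ where
  toFun := applyFst φ
  map_add' x y := by ext; simp [applyFst, add_mul, Finset.sum_add_distrib]
  map_smul' c x := by ext; simp [applyFst, Finset.mul_sum, mul_assoc]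

theorem applyFst_kronecker (φ : Matrix (Fin n) (Fin n) ℂ →ₗ[ℂ] Matrix (Fin m) (Fin m) ℂ)
    (P : Matrix (Fin n) (Fin n) ℂ) (Q : Matrix (Fin m) (Fin m) ℂ) :
    applyFst φ (P ⊗ₖ Q) = φ P ⊗ₖ Q := by
  ext p q
  conv_rhs => rw [matrix_eq_sum_single P]
  simp only [applyFst, kroneckerMap_apply, map_sum, Matrix.sum_apply, Finset.sum_mul]
  refine Finset.sum_congr rfl fun i _ => Finset.sum_congr rfl fun j _ => ?_
  rw [show single i j (P i j) = P i j • single i j 1 by simp [smul_single], map_smul,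
    Matrix.smul_apply, smul_eq_mul]
  ring

theorem dotProduct_applyFst_ofChoiMatrix_mulVec (J x : Matrix (Fin n × Fin m) (Fin n × Fin m) ℂ) :
    star (maxEntangled (Fin m)) ⬝ᵥ applyFst (ofChoiMatrix J) x *ᵥ maxEntangled (Fin m) =
      trace (x * Jᵀ) := by
  simp only [maxEntangled, dotProduct, mulVec, applyFst, ofChoiMatrix_single, trace, diag,
    mul_apply, transpose_apply, of_apply, Fintype.sum_prod_type, Pi.star_apply, apply_ite,
    star_one, star_zero, ite_mul, mul_one, one_mul, mul_zero, zero_mul, Finset.sum_ite_eq,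
    Finset.mem_univ, if_true,
    Finset.sum_comm (s := (Finset.univ : Finset (Fin m))) (t := (Finset.univ : Finset (Fin n)))]

theorem applyFst_posSemidef_of_mem_separable
    {φ : Matrix (Fin n) (Fin n) ℂ →ₗ[ℂ] Matrix (Fin m) (Fin m) ℂ}
    (hφ : ∀ M : Matrix (Fin n) (Fin n) ℂ, M.PosSemidef → (φ M).PosSemidef)
    {x : Matrix (Fin n × Fin m) (Fin n × Fin m) ℂ} (hx : x ∈ Separable n m) :
    (applyFst φ x).PosSemidef := by
  have hcone : Set.MapsTo (applyFstₗ φ) (productCone (Fin n) (Fin m)) {M | M.PosSemidef} := by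
    intro y hy
    induction hy using Submodule.span_induction with
    | mem y hy =>
      obtain ⟨P, Q, hP, hQ, rfl⟩ := hy
      show (applyFst φ (P ⊗ₖ Q)).PosSemidef
      rw [applyFst_kronecker]
      exact (hφ P hP).kronecker hQ
    | zero => simpa using PosSemidef.zero
    | add y z _ _ hy hz => simpa using hy.add hz
    | smul c y _ hy => simpa [LinearMap.map_smul_of_tower] using hy.smul c.2
  rw [separable_eq_closure_productCone] at hx
  exact isClosed_setOf_posSemidef.closure_subset
    (map_mem_closure (LinearMap.continuous_of_finiteDimensional (applyFstₗ φ)) hx hcone)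

theorem mem_separable_of_forall_applyFst_posSemidef {x : Matrix (Fin n × Fin m) (Fin n × Fin m) ℂ}
    (hx : x.IsHermitian)
    (h : ∀ φ : Matrix (Fin n) (Fin n) ℂ →ₗ[ℂ] Matrix (Fin m) (Fin m) ℂ,
      (∀ M : Matrix (Fin n) (Fin n) ℂ, M.PosSemidef → (φ M).PosSemidef) →
      (applyFst φ x).PosSemidef) :
    x ∈ Separable n m := by
  by_contra hxs
  rw [separable_eq_closure_productCone, ← Submodule.coe_closure] at hxs
  obtain ⟨f, hf, hfx⟩ := ProperCone.hyperplane_separation_point _ hxs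
  obtain ⟨C, hC, hCf⟩ := exists_isHermitian_trace_mul_eq f.toLinearMap
  have hφ (P : Matrix (Fin n) (Fin n) ℂ) (hP : P.PosSemidef) :
      (ofChoiMatrix Cᵀ P).PosSemidef := by
    refine .of_dotProduct_mulVec_nonneg (hC.transpose.ofChoiMatrix hP.isHermitian) fun v => ?_
    have hQ : (vecMulVec (star v) v).PosSemidef := by
      simpa using posSemidef_vecMulVec_self_star (star v)
    rw [dotProduct_ofChoiMatrix_mulVec, transpose_transpose,
      hCf _ (hP.kronecker hQ).isHermitian]
    exact_mod_cast hf _ (subset_closure (PointedCone.subset_hull ⟨P, _, hP, hQ, rfl⟩))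
  have hωx := (h _ hφ).dotProduct_mulVec_nonneg (maxEntangled (Fin m))
  rw [dotProduct_applyFst_ofChoiMatrix_mulVec, transpose_transpose, hCf x hx] at hωx
  exact hfx.not_ge (by exact_mod_cast hωx)

end ApplyFst

/-- Horodecki criterion: a positive `x ∈ Mₙ(ℂ) ⊗ M_m(ℂ)` is separable iff
applying any positive map `φ : Mₙ(ℂ) → M_m(ℂ)` to one tensor factor of `x` yields a
positive matrix. -/
theorem stmt12 (n m : ℕ) (x : Matrix (Fin n × Fin m) (Fin n × Fin m) ℂ)
    (hx : x.PosSemidef) :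
    x ∈ Separable n m ↔
      ∀ φ : Matrix (Fin n) (Fin n) ℂ →ₗ[ℂ] Matrix (Fin m) (Fin m) ℂ,
        (∀ M : Matrix (Fin n) (Fin n) ℂ, M.PosSemidef → (φ M).PosSemidef) →
        (applyFst φ x).PosSemidef := by
  exact ⟨fun hxs φ hφ => applyFst_posSemidef_of_mem_separable hφ hxs,
    mem_separable_of_forall_applyFst_posSemidef hx.isHermitian⟩
end
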